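/- Let A, B be v×v Hermitian matrices. Then for every j, the j-th largest singular value satisfies t_j(AB + BA) ≤ t_j((A² + B²) ⊕ (A² + B²)). -/

import Mathlib

open ComplexOrder

/-- The singular values of a complex square matrix, arranged in decreasing order:
the eigenvalues of `(Aᴴ * A) ^ (1/2)`, i.e. the square roots of the eigenvalues of
`Aᴴ * A`, sorted decreasingly. -/
noncomputable def sval {n : ℕ} (A : Matrix (Fin n) (Fin n) ℂ) : Fin n → ℝ :=
  fun j =>
    let e : Fin n → ℝ := fun i =>
      Real.sqrt ((Matrix.posSemidef_conjTranspose_mul_self A).isHermitian.eigenvalues i)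
    e (Tuple.sort (fun i => -(e i)) j)

/-- The block-diagonal direct sum of two square matrices, indexed by `Fin (n + n)`. -/
noncomputable def dirSum {n : ℕ} (A B : Matrix (Fin n) (Fin n) ℂ) :
    Matrix (Fin (n + n)) (Fin (n + n)) ℂ :=
  Matrix.reindex finSumFinEquiv finSumFinEquiv (Matrix.fromBlocks A 0 0 B)

/-! Compare the counting functions `#{i | c < ·}` for every threshold `c`: for antitone sequences
this compares them entrywise. The singular values of the Hermitian matrix `M = AB + BA` are the
`|λᵢ(M)|`, and `#{c < |λ(M)|} ≤ #{c < λ(M)} + #{c < -λ(M)}`. Since `(A ∓ B)ᴴ(A ∓ B) ≥ 0` gives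
`±M ≤ N` for `N = A² + B²`, each term is at most `#{c < λ(N)}`: eigenvalue counts are monotone in
the Loewner order, because a vector spanned by the eigenvectors of `±M` with eigenvalue `> c` and
orthogonal to those of `N` with eigenvalue `> c` satisfies `c‖x‖² < ⟪x, ±M x⟫ ≤ ⟪x, N x⟫ ≤ c‖x‖²`,
so it vanishes. Finally `2 · #{c < |λ(N)|}` counts the singular values of `N ⊕ N` above `c`. -/

open scoped InnerProductSpace MatrixOrder
open Matrix RCLike

section Counting

variable {𝕜 E ι ι' : Type*} [RCLike 𝕜] [NormedAddCommGroup E] [InnerProductSpace 𝕜 E]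
  [Fintype ι] [Fintype ι'] {T T' : E →ₗ[𝕜] E} {u : ι → E} {μ : ι → ℝ} {ν : ι' → ℝ}

theorem Orthonormal.norm_sum_smul_sq (hu : Orthonormal 𝕜 u) (g : ι → 𝕜) :
    ‖∑ i, g i • u i‖ ^ 2 = ∑ i, ‖g i‖ ^ 2 := by
  rw [@norm_sq_eq_re_inner 𝕜, hu.inner_sum, map_sum]
  simp [RCLike.conj_mul]

theorem Orthonormal.re_inner_sum_smul_map (hu : Orthonormal 𝕜 u)
    (hTu : ∀ i, T (u i) = (μ i : 𝕜) • u i) (g : ι → 𝕜) :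
    re ⟪∑ i, g i • u i, T (∑ i, g i • u i)⟫_𝕜 = ∑ i, μ i * ‖g i‖ ^ 2 := by
  have hT : T (∑ i, g i • u i) = ∑ i, (g i * μ i) • u i := by
    simp only [map_sum, map_smul, hTu, smul_smul]
  rw [hT, hu.inner_sum, map_sum]
  refine Finset.sum_congr rfl fun i _ => ?_
  rw [← mul_assoc, RCLike.conj_mul, mul_comm]
  norm_cast

theorem Orthonormal.mul_norm_sq_lt_re_inner (hu : Orthonormal 𝕜 u)
    (hTu : ∀ i, T (u i) = (μ i : 𝕜) • u i) {c : ℝ} (hμ : ∀ i, c < μ i) {g : ι → 𝕜} (hg : g ≠ 0) :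
    c * ‖∑ i, g i • u i‖ ^ 2 < re ⟪∑ i, g i • u i, T (∑ i, g i • u i)⟫_𝕜 := by
  rw [hu.norm_sum_smul_sq, hu.re_inner_sum_smul_map hTu, Finset.mul_sum]
  obtain ⟨i₀, hi₀⟩ := Function.ne_iff.1 hg
  exact Finset.sum_lt_sum (fun i _ => mul_le_mul_of_nonneg_right (hμ i).le (by positivity))
    ⟨i₀, Finset.mem_univ _, mul_lt_mul_of_pos_right (hμ i₀) (pow_pos (norm_pos_iff.2 hi₀) 2)⟩

theorem OrthonormalBasis.re_inner_le_mul_norm_sq (w : OrthonormalBasis ι' 𝕜 E)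
    (hTw : ∀ j, T' (w j) = (ν j : 𝕜) • w j) {c : ℝ} {x : E}
    (hx : ∀ j, c < ν j → ⟪w j, x⟫_𝕜 = 0) :
    re ⟪x, T' x⟫_𝕜 ≤ c * ‖x‖ ^ 2 := by
  set g := fun j => ⟪w j, x⟫_𝕜
  have hxg : x = ∑ j, g j • w j := (w.sum_repr' x).symm
  rw [hxg, w.orthonormal.re_inner_sum_smul_map hTw, w.orthonormal.norm_sum_smul_sq,
    Finset.mul_sum]
  refine Finset.sum_le_sum fun j _ => ?_
  by_cases hj : c < ν j
  · simp [g, hx j hj]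
  · exact mul_le_mul_of_nonneg_right (not_lt.1 hj) (by positivity)

theorem Orthonormal.natCard_lt_le_of_le (hu : Orthonormal 𝕜 u)
    (hTu : ∀ i, T (u i) = (μ i : 𝕜) • u i) (w : OrthonormalBasis ι' 𝕜 E)
    (hTw : ∀ j, T' (w j) = (ν j : 𝕜) • w j) (hTT' : T ≤ T') (c : ℝ) :
    Nat.card {i // c < μ i} ≤ Nat.card {j // c < ν j} := by
  let Φ : ({i // c < μ i} → 𝕜) →ₗ[𝕜] ({j // c < ν j} → 𝕜) :=
    LinearMap.pi fun j => innerₛₗ 𝕜 (w j) ∘ₗ Fintype.linearCombination 𝕜 (u ∘ Subtype.val)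
  have hΦ : Function.Injective Φ := by
    refine (injective_iff_map_eq_zero Φ).2 fun g hg => ?_
    by_contra hg0
    set x := ∑ i, g i • (u ∘ Subtype.val) i
    have hlow := (hu.comp _ Subtype.val_injective).mul_norm_sq_lt_re_inner (fun i => hTu i)
      (fun i => i.2) hg0
    have hup : re ⟪x, T' x⟫_𝕜 ≤ c * ‖x‖ ^ 2 :=
      w.re_inner_le_mul_norm_sq hTw fun j hj => by
        simpa [Φ, x, Fintype.linearCombination_apply] using congrFun hg ⟨j, hj⟩
    have hmono : re ⟪x, T x⟫_𝕜 ≤ re ⟪x, T' x⟫_𝕜 := by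
      have := hTT'.re_inner_nonneg_right x
      rw [LinearMap.sub_apply, inner_sub_right, map_sub] at this
      linarith
    linarith
  simpa [Nat.card_eq_fintype_card] using LinearMap.finrank_le_finrank_of_injective hΦ

end Counting

theorem natCard_subtype_mono {α : Type*} [Finite α] {p q : α → Prop} (h : ∀ x, p x → q x) :
    Nat.card {x // p x} ≤ Nat.card {x // q x} :=
  Nat.card_le_card_of_injective _ (Subtype.impEmbedding p q h).injective

theorem natCard_lt_abs_le_add {α : Type*} [Finite α] (f : α → ℝ) (c : ℝ) :
    Nat.card {x // c < |f x|} ≤ Nat.card {x // c < f x} + Nat.card {x // c < -f x} := by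
  classical
  simp_rw [lt_abs]
  rw [← Nat.card_sum]
  exact Nat.card_le_card_of_injective _ (subtypeOrLeftEmbedding _ _).injective

theorem Antitone.lt_iff_lt_natCard {α : Type*} [LinearOrder α] {m : ℕ} {a : Fin m → α}
    (ha : Antitone a) (c : α) (j : Fin m) : c < a j ↔ (j : ℕ) < Nat.card {i // c < a i} := by
  classical
  rw [Nat.card_eq_fintype_card, Fintype.card_subtype]
  constructor
  · intro hj
    have hsub : Finset.Iic j ⊆ Finset.univ.filter (fun i => c < a i) := fun i hi => by
      simpa using hj.trans_le (ha (Finset.mem_Iic.1 hi))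
    simpa using Finset.card_le_card hsub
  · intro hj
    by_contra! hjc
    have hsub : Finset.univ.filter (fun i => c < a i) ⊆ Finset.Iio j := fun i hi => by
      simp only [Finset.mem_filter, Finset.mem_univ, true_and] at hi
      exact Finset.mem_Iio.2 (lt_of_not_ge fun hji => (hi.trans_le (ha hji)).not_ge hjc)
    have := (Finset.card_le_card hsub).trans_eq (Fin.card_Iio j)
    omega

theorem le_of_forall_natCard_lt_le {α : Type*} [LinearOrder α] {m m' : ℕ} {a : Fin m → α}
    {b : Fin m' → α} (ha : Antitone a) (hb : Antitone b)
    (h : ∀ c, Nat.card {i // c < a i} ≤ Nat.card {i // c < b i}) {j : Fin m} {j' : Fin m'}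
    (hj : (j : ℕ) = j') : a j ≤ b j' := by
  by_contra! hlt
  have hj' := (ha.lt_iff_lt_natCard _ j).1 hlt
  exact lt_irrefl _ ((hb.lt_iff_lt_natCard _ j').2 (hj ▸ hj'.trans_le (h _)))

section MatrixCounting

variable {𝕜 n ι ι' : Type*} [RCLike 𝕜] [Fintype n] [DecidableEq n] [Fintype ι] [Fintype ι']

theorem Matrix.toEuclideanLin_mono {P Q : Matrix n n 𝕜} (h : P ≤ Q) :
    toEuclideanLin P ≤ toEuclideanLin Q := by
  rw [LinearMap.le_def, ← map_sub, isPositive_toEuclideanLin_iff]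
  exact h

theorem Matrix.toEuclideanLin_eq_smul {P : Matrix n n 𝕜} {x : EuclideanSpace 𝕜 n} {r : ℝ}
    (h : P *ᵥ x = r • ⇑x) : toEuclideanLin P x = (r : 𝕜) • x := by
  rw [toLpLin_apply, h, ← WithLp.toLp_smul, RCLike.real_smul_eq_coe_smul (K := 𝕜)]

theorem Matrix.natCard_lt_le_of_le {P Q : Matrix n n 𝕜} (hPQ : P ≤ Q)
    {u : ι → EuclideanSpace 𝕜 n} (hu : Orthonormal 𝕜 u) {μ : ι → ℝ}
    (hPu : ∀ i, P *ᵥ u i = μ i • ⇑(u i)) (w : OrthonormalBasis ι' 𝕜 (EuclideanSpace 𝕜 n))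
    {ν : ι' → ℝ} (hQw : ∀ j, Q *ᵥ w j = ν j • ⇑(w j)) (c : ℝ) :
    Nat.card {i // c < μ i} ≤ Nat.card {j // c < ν j} :=
  hu.natCard_lt_le_of_le (fun i => toEuclideanLin_eq_smul (hPu i)) w
    (fun j => toEuclideanLin_eq_smul (hQw j)) (toEuclideanLin_mono hPQ) c

theorem Matrix.IsHermitian.conjTranspose_mul_self_mulVec_eigenvectorBasis {A : Matrix n n 𝕜}
    (hA : A.IsHermitian) (i : n) :
    (Aᴴ * A) *ᵥ hA.eigenvectorBasis i = (hA.eigenvalues i ^ 2) • ⇑(hA.eigenvectorBasis i) := by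
  rw [hA.eq, ← mulVec_mulVec, hA.mulVec_eigenvectorBasis, mulVec_smul,
    hA.mulVec_eigenvectorBasis, smul_smul, sq]

end MatrixCounting

section HermitianSquares

variable {𝕜 n : Type*} [RCLike 𝕜] [Fintype n] {A B : Matrix n n 𝕜}

theorem Matrix.IsHermitian.mul_add_mul (hA : A.IsHermitian) (hB : B.IsHermitian) :
    (A * B + B * A).IsHermitian := by
  rw [IsHermitian, conjTranspose_add, conjTranspose_mul, conjTranspose_mul, hA.eq, hB.eq,
    add_comm]

theorem Matrix.IsHermitian.mul_add_mul_le_sq_add_sq [DecidableEq n] (hA : A.IsHermitian)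
    (hB : B.IsHermitian) : A * B + B * A ≤ A ^ 2 + B ^ 2 := by
  have h : (A - B)ᴴ * (A - B) = A ^ 2 + B ^ 2 - (A * B + B * A) := by
    rw [conjTranspose_sub, hA.eq, hB.eq]
    noncomm_ring
  exact le_iff.2 (h ▸ posSemidef_conjTranspose_mul_self (A - B))

theorem Matrix.IsHermitian.neg_mul_add_mul_le_sq_add_sq [DecidableEq n] (hA : A.IsHermitian)
    (hB : B.IsHermitian) : -(A * B + B * A) ≤ A ^ 2 + B ^ 2 := by
  have h : (A + B)ᴴ * (A + B) = A ^ 2 + B ^ 2 - -(A * B + B * A) := by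
    rw [conjTranspose_add, hA.eq, hB.eq]
    noncomm_ring
  exact le_iff.2 (h ▸ posSemidef_conjTranspose_mul_self (A + B))

end HermitianSquares

section SingularValues

variable {n : ℕ} {ι : Type*} [Fintype ι]

theorem sval_nonneg (X : Matrix (Fin n) (Fin n) ℂ) (i : Fin n) : 0 ≤ sval X i :=
  Real.sqrt_nonneg _

theorem sval_antitone (X : Matrix (Fin n) (Fin n) ℂ) : Antitone (sval X) := fun _ _ hij =>
  neg_le_neg_iff.1 <| Tuple.monotone_sort
    (fun i => -√((posSemidef_conjTranspose_mul_self X).isHermitian.eigenvalues i)) hij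

theorem natCard_lt_sval_of_neg (X : Matrix (Fin n) (Fin n) ℂ) {c : ℝ} (hc : c < 0) :
    Nat.card {i // c < sval X i} = n := by
  rw [Nat.card_congr (Equiv.subtypeUnivEquiv fun i => hc.trans_le (sval_nonneg X i))]
  simp

theorem natCard_lt_sval_of_nonneg (X : Matrix (Fin n) (Fin n) ℂ) {c : ℝ} (hc : 0 ≤ c) :
    Nat.card {i // c < sval X i} =
      Nat.card {i // c ^ 2 < (posSemidef_conjTranspose_mul_self X).isHermitian.eigenvalues i} := by
  let e : Fin n → ℝ := fun i =>
    √((posSemidef_conjTranspose_mul_self X).isHermitian.eigenvalues i)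
  calc Nat.card {i // c < sval X i} = Nat.card {i // c < e i} :=
        Nat.card_congr ((Tuple.sort fun i => -e i).subtypeEquiv fun _ => Iff.rfl)
    _ = _ := Nat.card_congr (Equiv.subtypeEquivRight fun i => Real.lt_sqrt hc)

theorem natCard_lt_le_natCard_lt_sval (X : Matrix (Fin n) (Fin n) ℂ)
    {u : ι → EuclideanSpace ℂ (Fin n)} (hu : Orthonormal ℂ u) {σ : ι → ℝ}
    (hXu : ∀ i, (Xᴴ * X) *ᵥ u i = (σ i ^ 2) • ⇑(u i)) {c : ℝ} (hc : 0 ≤ c) :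
    Nat.card {i // c < σ i} ≤ Nat.card {i // c < sval X i} := by
  have hX := (posSemidef_conjTranspose_mul_self X).isHermitian
  calc Nat.card {i // c < σ i} ≤ Nat.card {i // c ^ 2 < σ i ^ 2} :=
        natCard_subtype_mono fun i hi => pow_lt_pow_left₀ hi hc two_ne_zero
    _ ≤ Nat.card {i // c ^ 2 < hX.eigenvalues i} :=
        natCard_lt_le_of_le le_rfl hu hXu hX.eigenvectorBasis hX.mulVec_eigenvectorBasis _
    _ = _ := (natCard_lt_sval_of_nonneg X hc).symm

theorem natCard_lt_sval_le_natCard_lt (X : Matrix (Fin n) (Fin n) ℂ)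
    (b : OrthonormalBasis ι ℂ (EuclideanSpace ℂ (Fin n))) {σ : ι → ℝ} (hσ : ∀ i, 0 ≤ σ i)
    (hXb : ∀ i, (Xᴴ * X) *ᵥ b i = (σ i ^ 2) • ⇑(b i)) {c : ℝ} (hc : 0 ≤ c) :
    Nat.card {i // c < sval X i} ≤ Nat.card {i // c < σ i} := by
  have hX := (posSemidef_conjTranspose_mul_self X).isHermitian
  calc Nat.card {i // c < sval X i} = Nat.card {i // c ^ 2 < hX.eigenvalues i} :=
        natCard_lt_sval_of_nonneg X hc
    _ ≤ Nat.card {i // c ^ 2 < σ i ^ 2} :=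
        natCard_lt_le_of_le le_rfl hX.eigenvectorBasis.orthonormal hX.mulVec_eigenvectorBasis b
          hXb _
    _ = _ := Nat.card_congr (Equiv.subtypeEquivRight fun i =>
        pow_lt_pow_iff_left₀ hc (hσ i) two_ne_zero)

theorem Matrix.IsHermitian.natCard_lt_sval_le {M : Matrix (Fin n) (Fin n) ℂ} (hM : M.IsHermitian)
    {c : ℝ} (hc : 0 ≤ c) :
    Nat.card {i // c < sval M i} ≤ Nat.card {i // c < |hM.eigenvalues i|} :=
  natCard_lt_sval_le_natCard_lt M hM.eigenvectorBasis (fun _ => abs_nonneg _)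
    (fun i => by rw [sq_abs, hM.conjTranspose_mul_self_mulVec_eigenvectorBasis]) hc

end SingularValues

section DirectSum

open WithLp

variable {𝕜 ι ι' : Type*} [RCLike 𝕜] {m n : ℕ}

theorem inner_toLp_append (x x' : Fin m → 𝕜) (y y' : Fin n → 𝕜) :
    ⟪toLp 2 (Fin.append x y), toLp 2 (Fin.append x' y')⟫_𝕜 =
      ⟪toLp 2 x, toLp 2 x'⟫_𝕜 + ⟪toLp 2 y, toLp 2 y'⟫_𝕜 := by
  simp [PiLp.inner_apply, Fin.sum_univ_add]

theorem Orthonormal.sumElim_append {u : ι → EuclideanSpace 𝕜 (Fin m)}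
    {u' : ι' → EuclideanSpace 𝕜 (Fin n)} (hu : Orthonormal 𝕜 u) (hu' : Orthonormal 𝕜 u') :
    Orthonormal 𝕜 (Sum.elim (fun i => toLp 2 (Fin.append (u i) 0))
      (fun i => toLp 2 (Fin.append 0 (u' i)))) := by
  classical
  rw [orthonormal_iff_ite] at hu hu' ⊢
  rintro (i | i) (j | j) <;> simp [inner_toLp_append, hu, hu']

theorem Fin.smul_append {M α : Type*} [SMul M α] (r : M) (x : Fin m → α) (y : Fin n → α) :
    r • Fin.append x y = Fin.append (r • x) (r • y) := by
  ext k
  refine Fin.addCases (fun i => ?_) (fun i => ?_) k <;> simp [-Fin.natAdd_eq_addNat]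

theorem dirSum_mulVec_append (P Q : Matrix (Fin n) (Fin n) ℂ) (x y : Fin n → ℂ) :
    dirSum P Q *ᵥ Fin.append x y = Fin.append (P *ᵥ x) (Q *ᵥ y) := by
  ext k
  refine Fin.addCases (fun i => ?_) (fun i => ?_) k <;>
    simp [dirSum, submatrix_mulVec_equiv, fromBlocks_mulVec, Function.comp_def,
      -Fin.natAdd_eq_addNat]

theorem dirSum_conjTranspose (P Q : Matrix (Fin n) (Fin n) ℂ) :
    (dirSum P Q)ᴴ = dirSum Pᴴ Qᴴ := by
  simp [dirSum, conjTranspose_submatrix, fromBlocks_conjTranspose]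

theorem dirSum_mul (P Q P' Q' : Matrix (Fin n) (Fin n) ℂ) :
    dirSum P Q * dirSum P' Q' = dirSum (P * P') (Q * Q') := by
  simp [dirSum, submatrix_mul_equiv, fromBlocks_multiply]

theorem natCard_lt_abs_add_natCard_lt_abs_le_sval_dirSum {P Q : Matrix (Fin n) (Fin n) ℂ}
    (hP : P.IsHermitian) (hQ : Q.IsHermitian) {c : ℝ} (hc : 0 ≤ c) :
    Nat.card {i // c < |hP.eigenvalues i|} + Nat.card {i // c < |hQ.eigenvalues i|} ≤
      Nat.card {k // c < sval (dirSum P Q) k} := by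
  have hS : (dirSum P Q)ᴴ * dirSum P Q = dirSum (Pᴴ * P) (Qᴴ * Q) := by
    rw [dirSum_conjTranspose, dirSum_mul]
  calc _ = Nat.card {s // c < Sum.elim (|hP.eigenvalues ·|) (|hQ.eigenvalues ·|) s} := by
        rw [Nat.card_congr Equiv.subtypeSum, Nat.card_sum]
        rfl
    _ ≤ _ := natCard_lt_le_natCard_lt_sval _
        (hP.eigenvectorBasis.orthonormal.sumElim_append hQ.eigenvectorBasis.orthonormal)
        (fun s => ?_) hc
  rcases s with i | i <;>
    simp [hS, dirSum_mulVec_append, Fin.smul_append, sq_abs,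
      hP.conjTranspose_mul_self_mulVec_eigenvectorBasis,
      hQ.conjTranspose_mul_self_mulVec_eigenvectorBasis]

end DirectSum

theorem sval_mul_add_mul_le {v : ℕ} {A B : Matrix (Fin v) (Fin v) ℂ}
    (hA : A.IsHermitian) (hB : B.IsHermitian) :
    ∀ j : Fin v,
      sval (A * B + B * A) j ≤
        sval (dirSum (A ^ 2 + B ^ 2) (A ^ 2 + B ^ 2)) (Fin.castAdd v j) := by
  intro j
  refine le_of_forall_natCard_lt_le (sval_antitone _) (sval_antitone _) (fun c => ?_) rfl
  obtain hc | hc := lt_or_ge c 0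
  · rw [natCard_lt_sval_of_neg _ hc, natCard_lt_sval_of_neg _ hc]
    omega
  have hM := hA.mul_add_mul hB
  have hN := (hA.pow 2).add (hB.pow 2)
  have hMN := natCard_lt_le_of_le (hA.mul_add_mul_le_sq_add_sq hB)
    hM.eigenvectorBasis.orthonormal hM.mulVec_eigenvectorBasis
    hN.eigenvectorBasis hN.mulVec_eigenvectorBasis c
  have hnegMN := natCard_lt_le_of_le (hA.neg_mul_add_mul_le_sq_add_sq hB)
    hM.eigenvectorBasis.orthonormal (μ := fun i => -hM.eigenvalues i)
    (fun i => by rw [neg_mulVec, hM.mulVec_eigenvectorBasis, neg_smul])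
    hN.eigenvectorBasis hN.mulVec_eigenvectorBasis c
  have habs : ∀ i, c < hN.eigenvalues i → c < |hN.eigenvalues i| :=
    fun i hi => hi.trans_le (le_abs_self _)
  calc _ ≤ Nat.card {i // c < |hM.eigenvalues i|} := hM.natCard_lt_sval_le hc
    _ ≤ Nat.card {i // c < hM.eigenvalues i} + Nat.card {i // c < -hM.eigenvalues i} :=
      natCard_lt_abs_le_add _ c
    _ ≤ Nat.card {i // c < |hN.eigenvalues i|} + Nat.card {i // c < |hN.eigenvalues i|} :=
      add_le_add (hMN.trans (natCard_subtype_mono habs))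
        (hnegMN.trans (natCard_subtype_mono habs))
    _ ≤ _ := natCard_lt_abs_add_natCard_lt_abs_le_sval_dirSum hN hN hc
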